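/- arXiv:2402.00962 — 2 statements merged into one kernel-verified Lean document; each statement's English description precedes it below -/
import Mathlib

section
/- Let F, G : Type u ⥤ Type u be endofunctors, α : F ⟶ G an epi natural transformation, b₁ : X₁ → G.obj X₁ and b₂ : X₂ → G.obj X₂ G-coalgebras, and a₁ : X₁ → F.obj X₁, a₂ : X₂ → F.obj X₂ any F-representations of b₁ and b₂. Then a relation R : X₁ → X₂ → Prop is a G-bisimulation between b₁ and b₂ iff it is a ≡^α-simulation (a simulation for the kernel-equivalence order on F) between a₁ and a₂. -/
open CategoryTheory

universe u

/-- Relation lifting `Rel(F)(R)`. -/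
def RelLift (F : Type u ⥤ Type u) {X Y : Type u} (R : X → Y → Prop)
    (u : F.obj X) (v : F.obj Y) : Prop :=
  ∃ w : F.obj {p : X × Y // R p.1 p.2},
    F.map (TypeCat.ofHom fun p => p.1.1) w = u ∧ F.map (TypeCat.ofHom fun p => p.1.2) w = v

/-- `R` is an `F`-bisimulation between coalgebras `c` and `d`. -/
def IsBisimulation (F : Type u ⥤ Type u) {X Y : Type u}
    (c : X → F.obj X) (d : Y → F.obj Y) (R : X → Y → Prop) : Prop :=
  ∀ x y, R x y → RelLift F R (c x) (d y)

/-- Order-enriched relation lifting `Rel(F)_⊑(R)`. -/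
def RelLiftOrd (F : Type u ⥤ Type u) (r : ∀ X : Type u, F.obj X → F.obj X → Prop)
    {X Y : Type u} (R : X → Y → Prop) (u : F.obj X) (v : F.obj Y) : Prop :=
  ∃ w : F.obj {p : X × Y // R p.1 p.2},
    r X u (F.map (TypeCat.ofHom fun p => p.1.1) w) ∧ r Y (F.map (TypeCat.ofHom fun p => p.1.2) w) v

/-- `R` is a `⊑`-simulation between coalgebras `c` and `d`. -/
def IsSimulation (F : Type u ⥤ Type u) (r : ∀ X : Type u, F.obj X → F.obj X → Prop)
    {X Y : Type u} (c : X → F.obj X) (d : Y → F.obj Y) (R : X → Y → Prop) : Prop :=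
  ∀ x y, R x y → RelLiftOrd F r R (c x) (d y)

/-- The kernel equivalence `≡^α` of a natural transformation `α : F ⟶ G`. -/
def kernelRel {F G : Type u ⥤ Type u} (α : F ⟶ G) (X : Type u) :
    F.obj X → F.obj X → Prop :=
  fun u u' => α.app X u = α.app X u'

/-- `r` is an order on the functor `F`: a functorial family of preorders. -/
def IsFunctorOrder (F : Type u ⥤ Type u)
    (r : ∀ X : Type u, F.obj X → F.obj X → Prop) : Prop :=
  (∀ (X : Type u) (u : F.obj X), r X u u) ∧
  (∀ (X : Type u) (u v w : F.obj X), r X u v → r X v w → r X u w) ∧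
  (∀ (X Y : Type u) (f : X → Y) (u u' : F.obj X), r X u u' → r Y (F.map (TypeCat.ofHom f) u) (F.map (TypeCat.ofHom f) u'))

/-! By naturality of `α`, a witness `w : F.obj ⟨R⟩` for `Rel(F)_≡^α(R) u v` is the same thing as a
witness `α w : G.obj ⟨R⟩` for `Rel(G)(R) (α u) (α v)`; since `α` is epi at `⟨R⟩`, every witness of
the latter has this form. -/

section

variable {F G : Type u ⥤ Type u} (α : F ⟶ G) {X Y : Type u} {R : X → Y → Prop}

theorem relLift_app_iff_relLiftOrd_kernelRel
    (hα : Function.Surjective (α.app {p : X × Y // R p.1 p.2})) (u : F.obj X) (v : F.obj Y) :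
    RelLift G R (α.app X u) (α.app Y v) ↔ RelLiftOrd F (kernelRel α) R u v := by
  constructor
  · rintro ⟨w, hw₁, hw₂⟩
    obtain ⟨w, rfl⟩ := hα w
    refine ⟨w, ?_, ?_⟩
    · rw [kernelRel, NatTrans.naturality_apply, hw₁]
    · rw [kernelRel, NatTrans.naturality_apply, hw₂]
  · rintro ⟨w, hw₁, hw₂⟩
    refine ⟨α.app _ w, ?_, ?_⟩
    · rw [← NatTrans.naturality_apply]; exact hw₁.symm
    · rw [← NatTrans.naturality_apply]; exact hw₂

end

/-- for an epi `α : F ⟶ G`, the `G`-bisimulations between `b₁` and `b₂` are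
precisely the `≡^α`-simulations between any `F`-representations `a₁`, `a₂` of them. -/
theorem isBisimulation_iff_kernel_simulation {F G : Type u ⥤ Type u} (α : F ⟶ G)
    (hepi : ∀ X : Type u, Function.Surjective (α.app X))
    {X₁ X₂ : Type u} (b₁ : X₁ → G.obj X₁) (b₂ : X₂ → G.obj X₂)
    (a₁ : X₁ → F.obj X₁) (a₂ : X₂ → F.obj X₂)
    (h₁ : α.app X₁ ∘ a₁ = b₁) (h₂ : α.app X₂ ∘ a₂ = b₂)
    (R : X₁ → X₂ → Prop) :
    IsBisimulation G b₁ b₂ R ↔ IsSimulation F (kernelRel α) a₁ a₂ R := by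
  subst h₁ h₂
  exact forall₂_congr fun x y => imp_congr_right fun _ =>
    relLift_app_iff_relLiftOrd_kernelRel α (hepi _) (a₁ x) (a₂ y)
end

section
/- Simulations are preserved by natural transformations: let F, G : Type u ⥤ Type u be endofunctors, ⊑ an order on F, α : F ⟶ G a natural transformation, and let R : X → Y → Prop be a ⊑-simulation between coalgebras a : X → F.obj X and b : Y → F.obj Y. Then R is a ⊑^α-simulation between the coalgebras α.app X ∘ a and α.app Y ∘ b, where ⊑^α is the projected order on G (the transitive closure of the relation relating x, x' : G.obj X iff x = x' or there exist u, u' : F.obj X with x = α.app X u, x' = α.app X u' and u ⊑_X u'). -/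
open CategoryTheory

universe u

/-- The projected relation `⊑^α` on `G`: the transitive closure of the relation relating
`x, x'` iff `x = x'` or they are `α`-images of elements related by `⊑` in `F`. -/
def projRel {F G : Type u ⥤ Type u} (α : F ⟶ G)
    (r : ∀ X : Type u, F.obj X → F.obj X → Prop) (X : Type u) :
    G.obj X → G.obj X → Prop :=
  Relation.TransGen (fun x x' =>
    x = x' ∨ ∃ u u', x = α.app X u ∧ x' = α.app X u' ∧ r X u u')

theorem projRel_app_of_rel {F G : Type u ⥤ Type u} (α : F ⟶ G)
    {r : ∀ X : Type u, F.obj X → F.obj X → Prop} {X : Type u} {u u' : F.obj X}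
    (h : r X u u') : projRel α r X (α.app X u) (α.app X u') :=
  Relation.TransGen.single (Or.inr ⟨u, u', rfl, rfl, h⟩)

theorem RelLiftOrd.app {F G : Type u ⥤ Type u} (α : F ⟶ G)
    {r : ∀ X : Type u, F.obj X → F.obj X → Prop} {X Y : Type u} {R : X → Y → Prop}
    {u : F.obj X} {v : F.obj Y} (h : RelLiftOrd F r R u v) :
    RelLiftOrd G (projRel α r) R (α.app X u) (α.app Y v) := by
  obtain ⟨w, hu, hv⟩ := h
  refine ⟨α.app _ w, ?_, ?_⟩
  · rw [← NatTrans.naturality_apply]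
    exact projRel_app_of_rel α hu
  · rw [← NatTrans.naturality_apply]
    exact projRel_app_of_rel α hv

theorem simulation_preserved_by_natTrans_general {F G : Type u ⥤ Type u} (α : F ⟶ G)
    (r : ∀ X : Type u, F.obj X → F.obj X → Prop)
    {X Y : Type u} (a : X → F.obj X) (b : Y → F.obj Y) (R : X → Y → Prop)
    (h : IsSimulation F r a b R) :
    IsSimulation G (projRel α r) (α.app X ∘ a) (α.app Y ∘ b) R :=
  fun x y hxy => (h x y hxy).app α

/-- simulations are preserved by natural transformations: a `⊑`-simulation
between `F`-coalgebras is a `⊑^α`-simulation between their `α`-images. -/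
theorem simulation_preserved_by_natTrans {F G : Type u ⥤ Type u} (α : F ⟶ G)
    (r : ∀ X : Type u, F.obj X → F.obj X → Prop) (hr : IsFunctorOrder F r)
    {X Y : Type u} (a : X → F.obj X) (b : Y → F.obj Y) (R : X → Y → Prop)
    (h : IsSimulation F r a b R) :
    IsSimulation G (projRel α r) (α.app X ∘ a) (α.app Y ∘ b) R :=
  simulation_preserved_by_natTrans_general α r a b R h
end
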